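/- Let X be a reflexive real Banach space, let D be a nonempty subset of X, let K : D → X*, and let M : X → 2^{X*}. If K + M is maximally monotone and D ∩ dom M is bounded, then ran K ⊂ ran(K + M); in fact K + M is surjective (ran(K+M) = X*). -/

import Mathlib

/-
Debrunner–Flor argument. For a monotone operator `A` and a target `w`, look for a point `x`
monotonically related to the graph of `A` at `w`, i.e. with `⟨w - v, x - y⟩ ≥ 0` for all
`v ∈ A y`; maximality then forces `w ∈ A x`. For a finite part `(yᵢ, vᵢ)` of the graph such a
point is found in the convex hull of the `yᵢ`: the matrix `aᵢⱼ = ⟨vᵢ - w, yⱼ - yᵢ⟩` has a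
nonpositive quadratic form on the simplex by monotonicity, and von Neumann's minimax theorem
turns this into weights `λ` with `a λ ≤ 0`, i.e. `x = ∑ λⱼ yⱼ` works. Since the domain is bounded,
all these points lie in a fixed ball, which is weakly compact in a reflexive space, so the finite
solutions yield a global one.
-/

open NormedSpace

/-- The operator `K + M` with domain `D`: it maps `x ∈ D` to `{K x + u : u ∈ M x}`
and `x ∉ D` to `∅`. -/
def sumOp {X : Type*} [NormedAddCommGroup X] [NormedSpace ℝ X]
    (D : Set X) (K : X → StrongDual ℝ X) (M : X → Set (StrongDual ℝ X)) : X → Set (StrongDual ℝ X) :=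
  fun x => {w | x ∈ D ∧ ∃ u ∈ M x, w = K x + u}

/-- Monotonicity of a set-valued operator from a Banach space into its dual. -/
def BMono {X : Type*} [NormedAddCommGroup X] [NormedSpace ℝ X]
    (A : X → Set (StrongDual ℝ X)) : Prop :=
  ∀ x y u v, u ∈ A x → v ∈ A y → (0:ℝ) ≤ (u - v) (x - y)

/-- Maximal monotonicity of a set-valued operator from a Banach space into its dual. -/
def BMaxMono {X : Type*} [NormedAddCommGroup X] [NormedSpace ℝ X]
    (A : X → Set (StrongDual ℝ X)) : Prop :=
  BMono A ∧ ∀ A', BMono A' → (∀ x, A x ⊆ A' x) → ∀ x, A' x ⊆ A x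

namespace Matrix

variable {ι : Type*} [Fintype ι]

theorem exists_mem_stdSimplex_mulVec_nonpos [Nonempty ι] (a : Matrix ι ι ℝ)
    (ha : ∀ l ∈ stdSimplex ℝ ι, l ⬝ᵥ a *ᵥ l ≤ 0) :
    ∃ l ∈ stdSimplex ℝ ι, a *ᵥ l ≤ 0 := by
  classical
  let payoff : (ι → ℝ) →ₗ[ℝ] (ι → ℝ) →ₗ[ℝ] ℝ := (toLinearMap₂' ℝ (S₁ := ℝ) (S₂ := ℝ) a).flip
  have hpayoff : ∀ l m, payoff l m = m ⬝ᵥ a *ᵥ l := fun l m => toLinearMap₂'_apply' a m l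
  have hne : (stdSimplex ℝ ι).Nonempty := ⟨_, single_mem_stdSimplex ℝ (Classical.arbitrary ι)⟩
  have hconv := convex_stdSimplex ℝ ι
  have hcpt := isCompact_stdSimplex ℝ ι
  obtain ⟨l, hl, m, hm, hsaddle⟩ := Sion.exists_isSaddlePointOn (f := fun l m => payoff l m)
    hne hconv hcpt
    (fun m _ => (payoff.flip m).continuous_of_finiteDimensional.lowerSemicontinuous
      |>.lowerSemicontinuousOn _)
    (fun m _ => ((payoff.flip m).convexOn hconv).quasiconvexOn)
    hconv hne hcpt
    (fun l _ => (payoff l).continuous_of_finiteDimensional.upperSemicontinuous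
      |>.upperSemicontinuousOn _)
    (fun l _ => ((payoff l).concaveOn hconv).quasiconcaveOn)
  refine ⟨l, hl, fun i => ?_⟩
  have hrow := hsaddle m hm _ (single_mem_stdSimplex ℝ i)
  simp only [hpayoff] at hrow
  simpa using hrow.trans (ha m hm)

theorem dotProduct_mulVec_self_nonpos {a : Matrix ι ι ℝ} (ha : ∀ i j, a i j + a j i ≤ 0)
    {l : ι → ℝ} (hl : 0 ≤ l) : l ⬝ᵥ a *ᵥ l ≤ 0 := by
  have hsymm : 2 * (l ⬝ᵥ a *ᵥ l) = l ⬝ᵥ (a + aᵀ) *ᵥ l := by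
    rw [add_mulVec, dotProduct_add, mulVec_transpose, dotProduct_comm l (l ᵥ* a),
      ← dotProduct_mulVec, two_mul]
  have hnonpos : l ⬝ᵥ (a + aᵀ) *ᵥ l ≤ 0 :=
    Finset.sum_nonpos fun i _ => mul_nonpos_of_nonneg_of_nonpos (hl i) <|
      Finset.sum_nonpos fun j _ => mul_nonpos_of_nonpos_of_nonneg (ha i j) (hl j)
  linarith

end Matrix

section Reflexive

variable {X : Type*} [NormedAddCommGroup X] [NormedSpace ℝ X]

theorem exists_mem_convexHull_forall_apply_sub_nonneg {ι : Type*} [Fintype ι] [Nonempty ι]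
    (y : ι → X) (v : ι → StrongDual ℝ X) (hmono : ∀ i j, 0 ≤ (v i - v j) (y i - y j))
    (w : StrongDual ℝ X) :
    ∃ x ∈ convexHull ℝ (Set.range y), ∀ i, 0 ≤ (w - v i) (x - y i) := by
  let a : Matrix ι ι ℝ := fun i j => (v i - w) (y j - y i)
  have ha : ∀ i j, a i j + a j i ≤ 0 := fun i j => by
    have hij := hmono i j
    simp only [a, sub_apply, map_sub] at hij ⊢
    linarith
  obtain ⟨l, hl, hal⟩ := a.exists_mem_stdSimplex_mulVec_nonpos
    fun l hl => Matrix.dotProduct_mulVec_self_nonpos ha hl.1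
  refine ⟨∑ j, l j • y j, (convex_convexHull ℝ _).sum_mem (fun j _ => hl.1 j) hl.2
    fun j _ => subset_convexHull ℝ _ ⟨j, rfl⟩, fun i => ?_⟩
  have hsub : ∑ j, l j • y j - y i = ∑ j, l j • (y j - y i) := by
    simp only [smul_sub, Finset.sum_sub_distrib, ← Finset.sum_smul, hl.2, one_smul]
  have hrow : a.mulVec l i = (v i - w) (∑ j, l j • y j - y i) := by
    simp only [hsub, map_sum, map_smul, smul_eq_mul, Matrix.mulVec, dotProduct, a, mul_comm]
  have hi := hal i
  rw [Pi.zero_apply, hrow] at hi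
  rw [← neg_sub, neg_apply]
  linarith

-- Weak compactness of closed balls in a reflexive space, as a finite intersection property.
theorem exists_forall_le_apply_of_forall_finset
    (hrefl : Function.Surjective ⇑(inclusionInDoubleDual ℝ X))
    {ι : Type*} (f : ι → StrongDual ℝ X) (c : ι → ℝ) (R : ℝ)
    (h : ∀ u : Finset ι, ∃ x, ‖x‖ ≤ R ∧ ∀ i ∈ u, c i ≤ f i x) :
    ∃ x, ∀ i, c i ≤ f i x := by
  let J := inclusionInDoubleDual ℝ X
  let halfspace : ι → Set (WeakDual ℝ (StrongDual ℝ X)) := fun i => {Φ | c i ≤ Φ (f i)}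
  have hball : IsCompact
      (WeakDual.toStrongDual ⁻¹' Metric.closedBall (0 : StrongDual ℝ (StrongDual ℝ X)) R) :=
    WeakDual.isCompact_closedBall 0 R
  obtain ⟨Φ, -, hΦ⟩ := hball.inter_iInter_nonempty halfspace
    (fun i => isClosed_le continuous_const (WeakDual.eval_continuous _)) fun u => by
      obtain ⟨x, hxR, hx⟩ := h u
      exact ⟨StrongDual.toWeakDual (J x),
        show J x ∈ Metric.closedBall 0 R from
          (dist_zero_right (J x)).trans_le ((double_dual_bound ℝ X x).trans hxR),
        Set.mem_iInter₂.mpr hx⟩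
  obtain ⟨x, hx⟩ := hrefl (WeakDual.toStrongDual Φ)
  refine ⟨x, fun i => ?_⟩
  have hi : c i ≤ WeakDual.toStrongDual Φ (f i) := Set.mem_iInter.mp hΦ i
  rwa [← hx] at hi

def IsMonotonicallyRelated (A : X → Set (StrongDual ℝ X)) (x : X) (w : StrongDual ℝ X) : Prop :=
  ∀ y, ∀ v ∈ A y, 0 ≤ (w - v) (x - y)

theorem BMono.exists_isMonotonicallyRelated
    (hrefl : Function.Surjective ⇑(inclusionInDoubleDual ℝ X))
    {A : X → Set (StrongDual ℝ X)} (hA : BMono A)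
    (hdom : Bornology.IsBounded {x | (A x).Nonempty}) (w : StrongDual ℝ X) :
    ∃ x, IsMonotonicallyRelated A x w := by
  obtain ⟨R, hR, hdomR⟩ := hdom.exists_pos_norm_le
  let graph := {p : X × StrongDual ℝ X // p.2 ∈ A p.1}
  obtain ⟨x, hx⟩ := exists_forall_le_apply_of_forall_finset hrefl
    (fun p : graph => w - p.1.2) (fun p => (w - p.1.2) p.1.1) R fun u => by
      rcases u.eq_empty_or_nonempty with rfl | hu
      · exact ⟨0, by simpa using hR.le, by simp⟩
      have : Nonempty u := hu.to_subtype
      obtain ⟨x, hxhull, hx⟩ := exists_mem_convexHull_forall_apply_sub_nonneg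
        (fun p : u => p.1.1.1) (fun p => p.1.1.2) (fun p q => hA _ _ _ _ p.1.2 q.1.2) w
      refine ⟨x, ?_, fun p hp => ?_⟩
      · refine mem_closedBall_zero_iff.mp <| convexHull_min ?_ (convex_closedBall 0 R) hxhull
        rintro _ ⟨p, rfl⟩
        exact mem_closedBall_zero_iff.mpr (hdomR _ ⟨_, p.1.2⟩)
      · exact sub_nonneg.mp ((hx ⟨p, hp⟩).trans_eq (map_sub _ _ _))
  exact ⟨x, fun y v hv => (map_sub _ _ _).trans_ge (sub_nonneg.mpr (hx ⟨(y, v), hv⟩))⟩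

theorem BMaxMono.mem_of_isMonotonicallyRelated {A : X → Set (StrongDual ℝ X)}
    (hA : BMaxMono A) {x : X} {w : StrongDual ℝ X} (hxw : IsMonotonicallyRelated A x w) :
    w ∈ A x := by
  let A' : X → Set (StrongDual ℝ X) := fun y => A y ∪ {v | y = x ∧ v = w}
  have hA' : BMono A' := by
    rintro y z u v (hu | ⟨hy, hu⟩) (hv | ⟨hz, hv⟩)
    · exact hA.1 y z u v hu hv
    · rw [hz, hv, ← neg_sub w, ← neg_sub x, neg_apply, map_neg, neg_neg]
      exact hxw y u hu
    · rw [hy, hu]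
      exact hxw z v hv
    · simp [hy, hu, hz, hv]
  exact hA.2 A' hA' (fun _ => Set.subset_union_left) x (Or.inr ⟨rfl, rfl⟩)

theorem BMaxMono.exists_mem_of_isBounded_dom
    (hrefl : Function.Surjective ⇑(inclusionInDoubleDual ℝ X))
    {A : X → Set (StrongDual ℝ X)} (hA : BMaxMono A)
    (hdom : Bornology.IsBounded {x | (A x).Nonempty}) (w : StrongDual ℝ X) :
    ∃ x, w ∈ A x :=
  let ⟨x, hx⟩ := hA.1.exists_isMonotonicallyRelated hrefl hdom w
  ⟨x, hA.mem_of_isMonotonicallyRelated hx⟩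

end Reflexive

theorem stmt_11_general
    {X : Type*} [NormedAddCommGroup X] [NormedSpace ℝ X]
    (hrefl : Function.Surjective ⇑(inclusionInDoubleDual ℝ X))
    (D : Set X)
    (K : X → StrongDual ℝ X) (M : X → Set (StrongDual ℝ X))
    (hmax : BMaxMono (sumOp D K M))
    (hbdd : Bornology.IsBounded (D ∩ {x | (M x).Nonempty})) :
    (∀ w : StrongDual ℝ X, ∃ x, w ∈ sumOp D K M x) ∧
    ∀ x ∈ D, ∃ p, K x ∈ sumOp D K M p := by
  have hdom : {x | (sumOp D K M x).Nonempty} ⊆ D ∩ {x | (M x).Nonempty} :=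
    fun _ ⟨_, hxD, u, hu, _⟩ => ⟨hxD, u, hu⟩
  have hsurj := hmax.exists_mem_of_isBounded_dom hrefl (hbdd.subset hdom)
  exact ⟨hsurj, fun x _ => hsurj (K x)⟩

/-- Proposition 3.10(i)[b]: if `K + M` is maximally monotone and `D ∩ dom M` is
bounded, then `K + M` is surjective; in particular `ran K ⊆ ran (K + M)`. -/
theorem stmt_11
    {X : Type*} [NormedAddCommGroup X] [NormedSpace ℝ X] [CompleteSpace X]
    (hrefl : Function.Surjective ⇑(inclusionInDoubleDual ℝ X))
    (D : Set X) (hD : D.Nonempty)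
    (K : X → StrongDual ℝ X) (M : X → Set (StrongDual ℝ X))
    (hmax : BMaxMono (sumOp D K M))
    (hbdd : Bornology.IsBounded (D ∩ {x | (M x).Nonempty})) :
    (∀ w : StrongDual ℝ X, ∃ x, w ∈ sumOp D K M x) ∧
    ∀ x ∈ D, ∃ p, K x ∈ sumOp D K M p :=
  stmt_11_general hrefl D K M hmax hbdd
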